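/- Let d ≥ 2 and let k, j, ℓ ∈ ℤ^d \ {0} (with |·| the Euclidean norm). If |k| - |j| - |ℓ| ≠ 0, then 1/||k| - |j| - |ℓ|| ≤ 27 |j| |ℓ| (|j| + |ℓ|). -/

import Mathlib

open scoped BigOperators

/-- Euclidean norm of a vector in `ℤ^d`. -/
noncomputable def zEnorm {d : ℕ} (k : Fin d → ℤ) : ℝ :=
  Real.sqrt (∑ i, ((k i : ℝ)) ^ 2)

/-!
Put `x = |k| - |j| - |ℓ|`. The quartic `(|k|² + |j|² - |ℓ|²)² - 4|k|²|j|²` is an integer and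
factors as `x (x + 2|j|) (x + 2|ℓ|) (x + 2|j| + 2|ℓ|)`. When `|x| < 1` the last three factors are
positive and at most `3|j|`, `3|ℓ|`, `3(|j| + |ℓ|)`, so the integer is nonzero and
`1 ≤ 27 |x| |j| |ℓ| (|j| + |ℓ|)`; when `|x| ≥ 1` the bound is trivial because `|j|, |ℓ| ≥ 1`.
-/

theorem zEnorm_sq {d : ℕ} (k : Fin d → ℤ) : zEnorm k ^ 2 = ((∑ i, k i ^ 2 : ℤ) : ℝ) := by
  rw [zEnorm, Real.sq_sqrt (by positivity)]
  push_cast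
  rfl

theorem one_le_zEnorm {d : ℕ} {k : Fin d → ℤ} (hk : k ≠ 0) : 1 ≤ zEnorm k := by
  obtain ⟨i, hi⟩ := Function.ne_iff.mp hk
  have hsum : (1 : ℤ) ≤ ∑ i, k i ^ 2 :=
    calc (1 : ℤ) ≤ k i ^ 2 := (one_le_sq_iff_one_le_abs _).mpr (Int.one_le_abs hi)
      _ ≤ ∑ i, k i ^ 2 := Finset.single_le_sum (fun i _ => sq_nonneg (k i)) (Finset.mem_univ i)
  have hnonneg : 0 ≤ zEnorm k := Real.sqrt_nonneg _
  rw [← one_le_sq_iff₀ hnonneg, zEnorm_sq]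
  exact_mod_cast hsum

theorem one_div_abs_sub_sub_le {a b c : ℝ} (hb : 1 ≤ b) (hc : 1 ≤ c) (hx : a - b - c ≠ 0)
    (hint : ∃ n : ℤ, (n : ℝ) = (a ^ 2 + b ^ 2 - c ^ 2) ^ 2 - 4 * a ^ 2 * b ^ 2) :
    1 / |a - b - c| ≤ 27 * b * c * (b + c) := by
  set x := a - b - c with hx_def
  obtain ⟨n, hn⟩ := hint
  have hx_pos : 0 < |x| := abs_pos.mpr hx
  rcases le_or_gt 1 |x| with hx_large | hx_small
  · calc 1 / |x| ≤ 1 := (div_le_one hx_pos).mpr hx_large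
      _ ≤ 27 * b * c * (b + c) := by nlinarith [mul_le_mul hb hc zero_le_one (by linarith)]
  · obtain ⟨hx_lower, hx_upper⟩ := abs_lt.mp hx_small
    have hfactor : (n : ℝ) = x * ((x + 2 * b) * (x + 2 * c) * (x + 2 * b + 2 * c)) := by
      rw [hn, hx_def]; ring
    have hP_pos : 0 < (x + 2 * b) * (x + 2 * c) * (x + 2 * b + 2 * c) := by
      apply mul_pos (mul_pos _ _) <;> linarith
    have hP_le : (x + 2 * b) * (x + 2 * c) * (x + 2 * b + 2 * c) ≤
        3 * b * (3 * c) * (3 * (b + c)) := by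
      gcongr <;> linarith
    have hn_ne : n ≠ 0 := by
      rintro rfl
      simp only [Int.cast_zero] at hfactor
      exact hx (mul_eq_zero.mp hfactor.symm |>.resolve_right hP_pos.ne')
    have hn_abs : (1 : ℝ) ≤ |x| * ((x + 2 * b) * (x + 2 * c) * (x + 2 * b + 2 * c)) := by
      rw [← abs_of_pos hP_pos, ← abs_mul, ← hfactor, ← Int.cast_abs]
      exact_mod_cast Int.one_le_abs hn_ne
    rw [div_le_iff₀ hx_pos]
    calc 1 ≤ |x| * ((x + 2 * b) * (x + 2 * c) * (x + 2 * b + 2 * c)) := hn_abs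
      _ ≤ |x| * (3 * b * (3 * c) * (3 * (b + c))) := by gcongr
      _ = 27 * b * c * (b + c) * |x| := by ring

theorem stmt1_general {d : ℕ} (k j l : Fin d → ℤ)
    (hj : j ≠ 0) (hl : l ≠ 0)
    (h : zEnorm k - zEnorm j - zEnorm l ≠ 0) :
    1 / |zEnorm k - zEnorm j - zEnorm l| ≤ 27 * zEnorm j * zEnorm l * (zEnorm j + zEnorm l) := by
  refine one_div_abs_sub_sub_le (one_le_zEnorm hj) (one_le_zEnorm hl) h
    ⟨((∑ i, k i ^ 2) + (∑ i, j i ^ 2) - (∑ i, l i ^ 2)) ^ 2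
      - 4 * (∑ i, k i ^ 2) * (∑ i, j i ^ 2), ?_⟩
  rw [zEnorm_sq k, zEnorm_sq j, zEnorm_sq l]
  push_cast
  ring

theorem stmt1 {d : ℕ} (hd : 2 ≤ d) (k j l : Fin d → ℤ)
    (hk : k ≠ 0) (hj : j ≠ 0) (hl : l ≠ 0)
    (h : zEnorm k - zEnorm j - zEnorm l ≠ 0) :
    1 / |zEnorm k - zEnorm j - zEnorm l| ≤ 27 * zEnorm j * zEnorm l * (zEnorm j + zEnorm l) :=
  stmt1_general k j l hj hl h
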